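/- arXiv:2302.13686 — 4 statements merged into one kernel-verified Lean document; each statement's English description precedes it below -/
import Mathlib

section
/- Let I = {0,1}, let A be the affine Cartan matrix of type A_1^{(1)} (a_{00} = a_{11} = 2, a_{01} = a_{10} = -2), and set q_0 = q_1 = p. Then a pair (φ_0, φ_1) ∈ 𝒜 × 𝒜 satisfies the shiftability system for A if and only if there exists b ∈ ℂ^× such that φ_0 = {p·b·x_0 x_1^{-1}}·{b·x_0^{-1} x_1} and φ_1 = {p·b·x_0^{-1} x_1}·{b·x_0 x_1^{-1}}. -/
noncomputable section

/-- The Laurent polynomial algebra `ℂ[x_i^{±1} : i ∈ ι]`, realized as the group algebra of the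
free abelian group `ι → ℤ` over `ℂ` (for `ι` finite this is `ℤ^ι`). -/
abbrev LaurentAlg (ι : Type*) : Type _ := AddMonoidAlgebra ℂ (ι → ℤ)

/-- The monomial `∏_i x_i^{μ i}`. -/
def mono {ι : Type*} (μ : ι → ℤ) : LaurentAlg ι := AddMonoidAlgebra.single μ 1

lemma mono_zero {ι : Type*} : mono (0 : ι → ℤ) = 1 := rfl

lemma mono_add {ι : Type*} (μ ν : ι → ℤ) : mono (μ + ν) = mono μ * mono ν := by
  simp [mono, AddMonoidAlgebra.single_mul_single]

/-- The auxiliary monoid homomorphism `μ ↦ c^{-μ i} · x^μ` underlying `ζ_i`. -/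
def zetaHom {ι : Type*} (c : ℂˣ) (i : ι) : Multiplicative (ι → ℤ) →* LaurentAlg ι where
  toFun μ := ((c ^ (-(Multiplicative.toAdd μ i)) : ℂˣ) : ℂ) • mono (Multiplicative.toAdd μ)
  map_one' := by
    simp [mono_zero]
  map_mul' μ ν := by
    show ((c ^ (-(Multiplicative.toAdd (μ * ν) i)) : ℂˣ) : ℂ) • mono (Multiplicative.toAdd (μ * ν)) = _
    have h : Multiplicative.toAdd (μ * ν) = Multiplicative.toAdd μ + Multiplicative.toAdd ν := rfl
    rw [h, mono_add, Pi.add_apply, neg_add, zpow_add, Units.val_mul, mul_smul,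
      smul_mul_assoc, mul_smul_comm]

/-- The `ℂ`-algebra endomorphism `ζ_i` of the Laurent polynomial algebra determined by
`ζ_i(x_j) = c^{-δ_{ij}} x_j` (its inverse automorphism is `zeta c⁻¹ i`). -/
def zeta {ι : Type*} (c : ℂˣ) (i : ι) : LaurentAlg ι →ₐ[ℂ] LaurentAlg ι :=
  AddMonoidAlgebra.lift ℂ (LaurentAlg ι) (ι → ℤ) (zetaHom c i)

/-- The element `{u}_s = (u - u⁻¹)/(s - s⁻¹)` for the unit `u = c · x^μ` of the Laurent
polynomial algebra (whose inverse is `c⁻¹ · x^{-μ}`). -/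
def brk {ι : Type*} (s c : ℂ) (μ : ι → ℤ) : LaurentAlg ι :=
  ((s - s⁻¹)⁻¹ : ℂ) • (c • mono μ - c⁻¹ • mono (-μ))

/-- The shiftability system (4.1) for the integer matrix `a` with parameters `q i`:
`ζ_i(φ_i) − φ_i = {y_i}_i` for all `i`, and `φ_i φ_j = ζ_j^{-1}(φ_i)·ζ_i^{-1}(φ_j)` for `i ≠ j`,
where `y_i = ∏_j x_j^{a j i}`. -/
def ShiftSystem {ι : Type*} (a : ι → ι → ℤ) (q : ι → ℂˣ) (φ : ι → LaurentAlg ι) : Prop :=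
  (∀ i, zeta (q i) i (φ i) - φ i = brk ((q i : ℂ)) 1 (fun j => a j i)) ∧
  (∀ i j, i ≠ j → φ i * φ j = zeta (q j)⁻¹ j (φ i) * zeta (q i)⁻¹ i (φ j))

/-- The exponent vector of the single variable `x_k`. -/
def xvec {ι : Type*} [DecidableEq ι] (k : ι) : ι → ℤ := fun j => if j = k then 1 else 0

end

noncomputable section

/-!
Write `φ₀ = P₀ + F` and `φ₁ = P₁ + G`, where `P₀ = particularSolution p (2, -2)` and
`P₁ = particularSolution p (-2, 2)` solve the two difference equations. These equations then say
`ζ₀ F = F` and `ζ₁ G = G`; as `p` is not a root of unity, `F` involves only `x₁` and `G` only `x₀`.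
Since `ζ₁⁻¹ P₀ = P₁` and `ζ₀⁻¹ P₁ = P₀`, the commutation relation becomes an identity whose
coefficient at `x₀^m x₁^n` couples the coefficients of `F` and `G`. On the lines `m = ±2` it gives
two-term recurrences for the coefficients of `F` which can only terminate at degree `±2`, so finite
support confines `F` to degrees `-2, 0, 2`; the coefficients at `x₀^{±2} x₁^{±2}` kill degrees `±2`.
The identity is symmetric under `x₀ ↔ x₁, F ↔ G`, so `G` is constant as well, and the coefficient
at `x₀^2 x₁^{-2}` gives `F = G`. Finally every constant is the constant term `brkConst p b` of the
bracket products for some `b ≠ 0`, by solving a quadratic equation in `p b²`.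
-/

open AddMonoidAlgebra Function

section

variable {ι : Type*}

lemma zeta_single (c : ℂˣ) (i : ι) (μ : ι → ℤ) (r : ℂ) :
    zeta c i (single μ r) = single μ (((c ^ (-μ i) : ℂˣ) : ℂ) * r) := by
  rw [zeta, lift_single]
  change r • (((c ^ (-μ i) : ℂˣ) : ℂ) • mono μ) = _
  rw [smul_smul, mono, smul_single, smul_eq_mul, mul_one, mul_comm]

lemma zeta_single_zero (c : ℂˣ) (i : ι) (r : ℂ) : zeta c i (single 0 r) = single 0 r := by
  simp [zeta_single]

lemma coeff_zeta (c : ℂˣ) (i : ι) (φ : LaurentAlg ι) (μ : ι → ℤ) :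
    (zeta c i φ).coeff μ = ((c ^ (-μ i) : ℂˣ) : ℂ) * φ.coeff μ := by
  classical
  induction φ using AddMonoidAlgebra.induction_linear with
  | zero => simp
  | add f g hf hg => simp only [map_add, coeff_add, Finsupp.add_apply, hf, hg, mul_add]
  | single ν r =>
    rw [zeta_single, coeff_single, coeff_single, Finsupp.single_apply, Finsupp.single_apply]
    split_ifs with h
    · rw [h]
    · rw [mul_zero]

lemma coeff_zeta_inv (c : ℂˣ) (i : ι) (φ : LaurentAlg ι) (μ : ι → ℤ) :
    (zeta c⁻¹ i φ).coeff μ = (c : ℂ) ^ μ i * φ.coeff μ := by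
  rw [coeff_zeta]
  push_cast
  rw [inv_zpow', neg_neg]

lemma coeff_eq_zero_of_zeta_eq_self {c : ℂˣ} (hc : ¬IsOfFinOrder c) {i : ι} {φ : LaurentAlg ι}
    (h : zeta c i φ = φ) {μ : ι → ℤ} (hμ : μ i ≠ 0) : φ.coeff μ = 0 := by
  have hpow : ((c ^ (-μ i) : ℂˣ) : ℂ) ≠ 1 := by
    rw [Ne, Units.val_eq_one]
    exact fun h1 => hc (isOfFinOrder_iff_zpow_eq_one.2 ⟨-μ i, neg_ne_zero.2 hμ, h1⟩)
  have h' := congrArg (fun ψ : LaurentAlg ι => ψ.coeff μ) h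
  simp only [coeff_zeta] at h'
  exact (mul_left_eq_self₀.1 h').resolve_left hpow

lemma eq_single_zero_of_coeff_eq_zero {φ : LaurentAlg ι} (h : ∀ μ, μ ≠ 0 → φ.coeff μ = 0) :
    φ = single 0 (φ.coeff 0) := by
  classical
  apply coeff_injective
  ext μ
  rw [coeff_single, Finsupp.single_apply]
  split_ifs with hμ
  · rw [hμ]
  · exact h μ (Ne.symm hμ)

lemma brk_eq_single (s c : ℂ) (μ : ι → ℤ) :
    brk s c μ = single μ ((s - s⁻¹)⁻¹ * c) - single (-μ) ((s - s⁻¹)⁻¹ * c⁻¹) := by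
  simp only [brk, mono, smul_sub, smul_single, smul_eq_mul, mul_one]

/-- For `μ = 2ν`, the non-constant part of `{s b x^ν} {b x^{-ν}}`, which does not depend on `b`. -/
def particularSolution (s : ℂ) (μ : ι → ℤ) : LaurentAlg ι :=
  single μ (-(s - s⁻¹)⁻¹ ^ 2 * s) + single (-μ) (-(s - s⁻¹)⁻¹ ^ 2 * s⁻¹)

def brkConst (s b : ℂ) : ℂ := (s - s⁻¹)⁻¹ ^ 2 * (s * b ^ 2 + (s * b ^ 2)⁻¹)

lemma brk_mul_brk_neg (s : ℂ) {b : ℂ} (hb : b ≠ 0) (ν : ι → ℤ) :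
    brk s (s * b) ν * brk s b (-ν) = particularSolution s (ν + ν) + single 0 (brkConst s b) := by
  rw [brk_eq_single, brk_eq_single, neg_neg, sub_mul, mul_sub, mul_sub, single_mul_single,
    single_mul_single, single_mul_single, single_mul_single, add_neg_cancel, neg_add_cancel,
    ← neg_add, particularSolution, brkConst]
  generalize (s - s⁻¹)⁻¹ = t
  rw [show t ^ 2 * (s * b ^ 2 + (s * b ^ 2)⁻¹) = t * (s * b) * (t * b) + t * (s * b)⁻¹ * (t * b⁻¹)
      by ring,
    show -t ^ 2 * s = -(t * (s * b) * (t * b⁻¹)) by field_simp,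
    show -t ^ 2 * s⁻¹ = -(t * (s * b)⁻¹ * (t * b)) by field_simp,
    single_add, single_neg, single_neg]
  abel

lemma zeta_particularSolution {s : ℂˣ} (hs : (s : ℂ) ≠ (s : ℂ)⁻¹) {i : ι} {μ : ι → ℤ}
    (hμ : μ i = 2) :
    zeta s i (particularSolution s μ) = particularSolution s μ + brk s 1 μ := by
  have hs₀ : (s : ℂ) ≠ 0 := s.ne_zero
  have hst : (s : ℂ) - (s : ℂ)⁻¹ ≠ 0 := sub_ne_zero.2 hs
  rw [particularSolution, map_add, zeta_single, zeta_single, Pi.neg_apply, hμ, brk_eq_single]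
  push_cast
  set t := ((s : ℂ) - (s : ℂ)⁻¹)⁻¹
  rw [show (s : ℂ) ^ (-2 : ℤ) * (-t ^ 2 * s) = -t ^ 2 * s + t * 1 by
      simp only [t]; field_simp; ring,
    show (s : ℂ) ^ (2 : ℤ) * (-t ^ 2 * (s : ℂ)⁻¹) = -t ^ 2 * (s : ℂ)⁻¹ - t * 1⁻¹ by
      simp only [t]; field_simp; ring,
    single_add, single_sub]
  abel

lemma zeta_inv_particularSolution (s : ℂˣ) {j : ι} {μ : ι → ℤ} (hμ : μ j = -2) :
    zeta s⁻¹ j (particularSolution s μ) = particularSolution s (-μ) := by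
  have hs₀ : (s : ℂ) ≠ 0 := s.ne_zero
  rw [particularSolution, particularSolution, map_add, zeta_single, zeta_single, Pi.neg_apply, hμ,
    neg_neg, add_comm]
  push_cast
  rw [neg_neg]
  congr 2
  · field_simp
  · field_simp

lemma zeta_sub_self_eq_brk_iff {s : ℂˣ} (hs : (s : ℂ) ≠ (s : ℂ)⁻¹) {i : ι} {μ : ι → ℤ}
    (hμ : μ i = 2) (F : LaurentAlg ι) :
    zeta s i (particularSolution s μ + F) - (particularSolution s μ + F) = brk s 1 μ ↔
      zeta s i F = F := by
  rw [map_add, zeta_particularSolution hs hμ]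
  constructor <;> intro h <;> linear_combination h

end

lemma exists_add_inv_eq (e : ℂ) : ∃ z : ℂ, z ≠ 0 ∧ z + z⁻¹ = e := by
  obtain ⟨d, hd⟩ := IsAlgClosed.exists_pow_nat_eq (e ^ 2 - 4) two_pos
  have hz : e + d ≠ 0 := by
    intro h
    rw [show d = -e by linear_combination h] at hd
    exact (by norm_num : (4 : ℂ) ≠ 0) (by linear_combination hd)
  refine ⟨(e + d) / 2, div_ne_zero hz two_ne_zero, ?_⟩
  field_simp
  linear_combination hd

lemma exists_brkConst_eq {s : ℂ} (hs₀ : s ≠ 0) (hs : s ≠ s⁻¹) (c : ℂ) :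
    ∃ b : ℂ, b ≠ 0 ∧ brkConst s b = c := by
  have hst : s - s⁻¹ ≠ 0 := sub_ne_zero.2 hs
  obtain ⟨z, hz, hzc⟩ := exists_add_inv_eq (c * (s - s⁻¹) ^ 2)
  obtain ⟨b, hb⟩ := IsAlgClosed.exists_pow_nat_eq (z / s) two_pos
  have hb₀ : b ≠ 0 := by
    rintro rfl
    exact div_ne_zero hz hs₀ (by simpa using hb.symm)
  refine ⟨b, hb₀, ?_⟩
  rw [brkConst, hb, mul_div_cancel₀ z hs₀, hzc, inv_pow, mul_comm c,
    inv_mul_cancel_left₀ (pow_ne_zero 2 hst)]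

lemma eq_zero_of_step {M : Type*} [Zero M] {f : ℤ → M} (hf : (support f).Finite) {S : Set ℤ}
    {d : ℤ} (hd : d ≠ 0) (hS : ∀ k ∈ S, k + d ∈ S) (h : ∀ k ∈ S, f (k + d) = 0 → f k = 0) :
    ∀ k ∈ S, f k = 0 := by
  intro k hk
  by_contra hfk
  have hchain : ∀ n : ℕ, k + n * d ∈ S ∧ f (k + n * d) ≠ 0 := by
    intro n
    induction n with
    | zero => simpa using ⟨hk, hfk⟩
    | succ n ih =>
      have hstep : k + n * d + d = k + ↑(n + 1) * d := by push_cast; ring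
      exact hstep ▸ ⟨hS _ ih.1, mt (h _ ih.1) ih.2⟩
  refine Set.infinite_of_injective_forall_mem (f := fun n : ℕ => k + n * d) ?_
    (fun n => (hchain n).2) hf
  intro m n hmn
  simpa [hd] using hmn

lemma eq_zero_of_recurrences {R : Type*} [Ring R] [NoZeroDivisors R] {f : ℤ → R}
    (hf : (support f).Finite) {α β γ δ : ℤ → R}
    (hα : ∀ k, k ≠ 2 → α k ≠ 0) (hβ : ∀ k, k ≠ -2 → β k ≠ 0)
    (h₁ : ∀ k, k ≠ 2 → k ≠ -2 → β (k + 2) * f (k + 2) + γ k * f k = 0)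
    (h₂ : ∀ k, k ≠ 2 → k ≠ -2 → α (k - 2) * f (k - 2) + δ k * f k = 0) :
    ∀ k, k ≠ 0 → k ≠ 2 → k ≠ -2 → f k = 0 := by
  have cancel : ∀ {a b x y : R}, a ≠ 0 → a * x + b * y = 0 → y = 0 → x = 0 := by
    intro a b x y ha h hy
    rw [hy, mul_zero, add_zero] at h
    exact (mul_eq_zero.1 h).resolve_left ha
  have h₁' : ∀ k, k ≠ -2 → k ≠ 0 → k ≠ 4 → f (k - 2) = 0 → f k = 0 := fun k hk _ _ =>
    cancel (hβ k hk) (by simpa using h₁ (k - 2) (by omega) (by omega))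
  have hup : ∀ k ∈ Set.Ioi (2 : ℤ), f k = 0 := eq_zero_of_step hf two_ne_zero
    (fun k (hk : 2 < k) => show 2 < k + 2 by omega) fun k (hk : 2 < k) =>
      cancel (hα k (by omega)) (by simpa using h₂ (k + 2) (by omega) (by omega))
  have hdown : ∀ k ∈ Set.Iio (-2 : ℤ), f k = 0 := eq_zero_of_step hf (by norm_num)
    (fun k (hk : k < -2) => show k + -2 < -2 by omega) fun k (hk : k < -2) =>
      h₁' k (by omega) (by omega) (by omega)
  have hm1 : f (-1) = 0 :=
    h₁' (-1) (by norm_num) (by norm_num) (by norm_num) (hdown (-1 - 2) (by norm_num))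
  have h1 : f 1 = 0 := h₁' 1 (by norm_num) (by norm_num) (by norm_num) hm1
  intro k hk0 hk2 hk2'
  obtain hk | rfl | rfl | hk : k < -2 ∨ k = -1 ∨ k = 1 ∨ 2 < k := by omega
  exacts [hdown k hk, hm1, h1, hup k hk]

/-- `recCoeffA s k = A - B s^k` and `recCoeffB s k = B - A s^k`, where
`particularSolution s μ = A x^μ + B x^{-μ}`. -/
def recCoeffA (s : ℂ) (k : ℤ) : ℂ := -(s - s⁻¹)⁻¹ ^ 2 * (s - s ^ (k - 1))

def recCoeffB (s : ℂ) (k : ℤ) : ℂ := -(s - s⁻¹)⁻¹ ^ 2 * (s⁻¹ - s ^ (k + 1))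

lemma sub_inv_ne_zero_of_injective {s : ℂ} (hs : Injective (s ^ · : ℤ → ℂ)) : s - s⁻¹ ≠ 0 :=
  sub_ne_zero.2 (by simpa using hs.ne (show (1 : ℤ) ≠ -1 by norm_num))

lemma recCoeffA_ne_zero {s : ℂ} (hs : Injective (s ^ · : ℤ → ℂ)) {k : ℤ} (hk : k ≠ 2) :
    recCoeffA s k ≠ 0 :=
  mul_ne_zero (neg_ne_zero.2 (pow_ne_zero _ (inv_ne_zero (sub_inv_ne_zero_of_injective hs))))
    (sub_ne_zero.2 (by simpa using hs.ne (show (1 : ℤ) ≠ k - 1 by omega)))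

lemma recCoeffB_ne_zero {s : ℂ} (hs : Injective (s ^ · : ℤ → ℂ)) {k : ℤ} (hk : k ≠ -2) :
    recCoeffB s k ≠ 0 :=
  mul_ne_zero (neg_ne_zero.2 (pow_ne_zero _ (inv_ne_zero (sub_inv_ne_zero_of_injective hs))))
    (sub_ne_zero.2 (by simpa using hs.ne (show (-1 : ℤ) ≠ k + 1 by omega)))

lemma one_sub_zpow_ne_zero {s : ℂ} (hs : Injective (s ^ · : ℤ → ℂ)) {k : ℤ} (hk : k ≠ 0) :
    1 - s ^ k ≠ 0 :=
  sub_ne_zero.2 (by simpa using hs.ne hk.symm)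

/-- `u a b` and `v a b` stand for the coefficients of `x₀^a x₁^b` in `F = φ₀ - P₀` and
`G = φ₁ - P₁`, and `key m n` is the coefficient of `x₀^m x₁^n` in the commutation relation. -/
structure IsAxisSolution (s : ℂ) (u v : ℤ → ℤ → ℂ) : Prop where
  finite_left : (support (u 0)).Finite
  finite_right : (support fun a => v a 0).Finite
  left : ∀ a b, a ≠ 0 → u a b = 0
  right : ∀ a b, b ≠ 0 → v a b = 0
  key : ∀ m n, recCoeffA s (m - 2) * v (m - 2) (n + 2) + recCoeffB s (n + 2) * u (m - 2) (n + 2)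
      + recCoeffB s (m + 2) * v (m + 2) (n - 2) + recCoeffA s (n - 2) * u (m + 2) (n - 2)
      + (1 - s ^ (m + n)) * (u 0 n * v m 0) = 0

namespace IsAxisSolution

variable {s : ℂ} {u v : ℤ → ℤ → ℂ} (H : IsAxisSolution s u v)
include H

lemma swap : IsAxisSolution s (fun a b => v b a) (fun a b => u b a) where
  finite_left := H.finite_right
  finite_right := H.finite_left
  left a b := H.right b a
  right a b := H.left b a
  key m n := by
    have h := H.key n m
    rw [add_comm n m] at h
    linear_combination h

variable (hs : Injective (s ^ · : ℤ → ℂ))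
include hs

lemma coeff_eq_zero_of_ne_two : ∀ k, k ≠ 0 → k ≠ 2 → k ≠ -2 → u 0 k = 0 := by
  refine eq_zero_of_recurrences H.finite_left (fun k => recCoeffA_ne_zero hs)
    (fun k => recCoeffB_ne_zero hs) (γ := fun k => (1 - s ^ (2 + k)) * v 2 0)
    (δ := fun k => (1 - s ^ (-2 + k)) * v (-2) 0) (fun k hk hk' => ?_) (fun k hk hk' => ?_)
  · have h := H.key 2 k
    rw [H.right (2 - 2) (k + 2) (by omega), H.right (2 + 2) (k - 2) (by omega),
      H.left (2 + 2) (k - 2) (by norm_num), sub_self] at h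
    linear_combination h
  · have h := H.key (-2) k
    rw [H.right (-2 - 2) (k + 2) (by omega), H.left (-2 - 2) (k + 2) (by norm_num),
      H.right (-2 + 2) (k - 2) (by omega), neg_add_cancel] at h
    linear_combination h

lemma coeff_two_eq_zero : u 0 2 = 0 := by
  have hprod : u 0 2 * v 2 0 = 0 := by
    have h := H.key 2 2
    rw [H.right (2 - 2) (2 + 2) (by norm_num), H.left (2 + 2) (2 - 2) (by norm_num),
      sub_self, show (2 : ℤ) + 2 = 4 by norm_num, H.coeff_eq_zero_of_ne_two hs 4 (by norm_num)
        (by norm_num) (by norm_num),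
      H.swap.coeff_eq_zero_of_ne_two hs 4 (by norm_num) (by norm_num) (by norm_num)] at h
    simp only [mul_zero, zero_add] at h
    exact (mul_eq_zero.1 h).resolve_left (one_sub_zpow_ne_zero hs (by norm_num))
  have h := H.key 2 0
  rw [H.right (2 - 2) (0 + 2) (by norm_num), H.right (2 + 2) (0 - 2) (by norm_num),
    H.left (2 + 2) (0 - 2) (by norm_num), sub_self, zero_add] at h
  have hsq : recCoeffB s 2 * u 0 2 ^ 2 = 0 := by
    linear_combination u 0 2 * h - (1 - s ^ (2 + 0 : ℤ)) * u 0 0 * hprod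
  exact pow_eq_zero_iff two_ne_zero |>.1 <|
    (mul_eq_zero.1 hsq).resolve_left (recCoeffB_ne_zero hs (by norm_num))

lemma coeff_neg_two_eq_zero : u 0 (-2) = 0 := by
  have hprod : u 0 (-2) * v (-2) 0 = 0 := by
    have h := H.key (-2) (-2)
    rw [neg_add_cancel, show (-2 : ℤ) - 2 = -4 by norm_num, H.left (-4) 0 (by norm_num),
      H.right 0 (-4) (by norm_num), H.coeff_eq_zero_of_ne_two hs (-4) (by norm_num) (by norm_num)
        (by norm_num),
      H.swap.coeff_eq_zero_of_ne_two hs (-4) (by norm_num) (by norm_num) (by norm_num)] at h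
    simp only [mul_zero, zero_add] at h
    exact (mul_eq_zero.1 h).resolve_left (one_sub_zpow_ne_zero hs (by norm_num))
  have h := H.key (-2) 0
  rw [H.right (-2 - 2) (0 + 2) (by norm_num), H.left (-2 - 2) (0 + 2) (by norm_num),
    H.right (-2 + 2) (0 - 2) (by norm_num), neg_add_cancel, zero_sub] at h
  have hsq : recCoeffA s (-2) * u 0 (-2) ^ 2 = 0 := by
    linear_combination u 0 (-2) * h - (1 - s ^ (-2 + 0 : ℤ)) * u 0 0 * hprod
  exact pow_eq_zero_iff two_ne_zero |>.1 <|
    (mul_eq_zero.1 hsq).resolve_left (recCoeffA_ne_zero hs (by norm_num))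

lemma coeff_eq_zero {k : ℤ} (hk : k ≠ 0) : u 0 k = 0 := by
  by_cases hk₂ : k = 2
  · exact hk₂ ▸ H.coeff_two_eq_zero hs
  by_cases hk₂' : k = -2
  · exact hk₂' ▸ H.coeff_neg_two_eq_zero hs
  exact H.coeff_eq_zero_of_ne_two hs k hk hk₂ hk₂'

lemma coeff_zero_eq : u 0 0 = v 0 0 := by
  have h := H.key 2 (-2)
  rw [H.right (2 + 2) (-2 - 2) (by norm_num), H.left (2 + 2) (-2 - 2) (by norm_num), sub_self,
    neg_add_cancel, add_neg_cancel, zpow_zero, sub_self] at h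
  have hBA : recCoeffB s 0 = -recCoeffA s 0 := by
    simp only [recCoeffA, recCoeffB, zero_sub, zero_add, zpow_neg_one, zpow_one]
    ring
  have h' : recCoeffA s 0 * (v 0 0 - u 0 0) = 0 := by linear_combination h - u 0 0 * hBA
  exact (sub_eq_zero.1 ((mul_eq_zero.1 h').resolve_left (recCoeffA_ne_zero hs (by norm_num)))).symm

end IsAxisSolution

lemma coeff_mul_eq_of_axes {F G : LaurentAlg (Fin 2)} (hF : ∀ μ, μ 0 ≠ 0 → F.coeff μ = 0)
    (hG : ∀ μ, μ 1 ≠ 0 → G.coeff μ = 0) (m n : ℤ) :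
    (F * G).coeff ![m, n] = F.coeff ![0, n] * G.coeff ![m, 0] := by
  rw [coeff_mul_apply_left, Finsupp.sum_eq_single ![0, n]]
  · congr 2
    ext i; fin_cases i <;> simp
  · intro μ hμ hne
    have hμ₀ : μ 0 = 0 := by_contra fun h => hμ (hF μ h)
    refine mul_eq_zero_of_right _ (hG _ ?_)
    intro h
    apply hne
    ext i; fin_cases i <;> simp at h ⊢ <;> omega
  · intro h
    rw [zero_mul]

lemma isAxisSolution_coeff {p : ℂˣ} {F G : LaurentAlg (Fin 2)}
    (hF : ∀ μ, μ 0 ≠ 0 → F.coeff μ = 0) (hG : ∀ μ, μ 1 ≠ 0 → G.coeff μ = 0)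
    (h : (particularSolution p ![2, -2] + F) * (particularSolution p (-![2, -2]) + G) =
      (particularSolution p (-![2, -2]) + zeta p⁻¹ 1 F) *
        (particularSolution p ![2, -2] + zeta p⁻¹ 0 G)) :
    IsAxisSolution p (fun a b => F.coeff ![a, b]) (fun a b => G.coeff ![a, b]) where
  finite_left := Set.Finite.preimage (fun a _ b _ hab => by simpa using congrFun hab 1)
    F.coeff.hasFiniteSupport
  finite_right := Set.Finite.preimage (fun a _ b _ hab => by simpa using congrFun hab 0)
    G.coeff.hasFiniteSupport
  left a b ha := hF _ (by simpa using ha)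
  right a b hb := hG _ (by simpa using hb)
  key m n := by
    have hF' : ∀ μ, μ 0 ≠ 0 → (zeta p⁻¹ 1 F).coeff μ = 0 := fun μ hμ => by
      rw [coeff_zeta_inv, hF μ hμ, mul_zero]
    have hG' : ∀ μ, μ 1 ≠ 0 → (zeta p⁻¹ 0 G).coeff μ = 0 := fun μ hμ => by
      rw [coeff_zeta_inv, hG μ hμ, mul_zero]
    have h' := congrArg (fun φ : LaurentAlg (Fin 2) => φ.coeff ![m, n])
      (show particularSolution p ![2, -2] * G + F * particularSolution p (-![2, -2]) + F * G =
          particularSolution p (-![2, -2]) * zeta p⁻¹ 0 G +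
            zeta p⁻¹ 1 F * particularSolution p ![2, -2] + zeta p⁻¹ 1 F * zeta p⁻¹ 0 G by
        linear_combination h)
    have e₁ : ![m, n] + ![2, -2] = ![m + 2, n - 2] := by ext i; fin_cases i <;> simp; ring
    have e₂ : ![m, n] + -![2, -2] = ![m - 2, n + 2] := by ext i; fin_cases i <;> simp; ring
    have e₃ : ![2, -2] + ![m, n] = ![m + 2, n - 2] := by rw [add_comm, e₁]
    have e₄ : -![2, -2] + ![m, n] = ![m - 2, n + 2] := by rw [add_comm, e₂]
    simp only [particularSolution, neg_neg, add_mul, mul_add, coeff_add, Finsupp.add_apply,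
      coeff_single_mul_apply, coeff_mul_single_apply, coeff_mul_eq_of_axes hF hG,
      coeff_mul_eq_of_axes hF' hG', coeff_zeta_inv, e₁, e₂, e₃, e₄, Matrix.cons_val_zero,
      Matrix.cons_val_one] at h'
    have hp₀ : (p : ℂ) ≠ 0 := p.ne_zero
    simp only [recCoeffA, recCoeffB, zpow_sub_one₀ hp₀, zpow_add_one₀ hp₀, zpow_add₀ hp₀ m n]
    linear_combination h'

lemma injective_val_zpow {p : ℂˣ} (hp : ¬IsOfFinOrder p) : Injective fun n : ℤ => (p : ℂ) ^ n :=
  fun m n h => injective_zpow_iff_not_isOfFinOrder.2 hp (Units.ext (by simpa using h))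

lemma exists_eq_single_zero_of_mul_eq {p : ℂˣ} (hp : ¬IsOfFinOrder p) {F G : LaurentAlg (Fin 2)}
    (hF : zeta p 0 F = F) (hG : zeta p 1 G = G)
    (h : (particularSolution p ![2, -2] + F) * (particularSolution p (-![2, -2]) + G) =
      (particularSolution p (-![2, -2]) + zeta p⁻¹ 1 F) *
        (particularSolution p ![2, -2] + zeta p⁻¹ 0 G)) :
    ∃ c, F = single 0 c ∧ G = single 0 c := by
  have hF₁ (μ : Fin 2 → ℤ) := coeff_eq_zero_of_zeta_eq_self (μ := μ) hp hF
  have hG₀ (μ : Fin 2 → ℤ) := coeff_eq_zero_of_zeta_eq_self (μ := μ) hp hG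
  have H := isAxisSolution_coeff hF₁ hG₀ h
  have hinj := injective_val_zpow hp
  have hF₀ : ∀ μ, μ ≠ 0 → F.coeff μ = 0 := by
    intro μ hμ
    by_cases hμ₀ : μ 0 = 0
    · have hμ₁ : μ 1 ≠ 0 := fun h₁ => hμ (by ext i; fin_cases i <;> simpa)
      convert H.coeff_eq_zero hinj hμ₁
      ext i; fin_cases i <;> simp [hμ₀]
    · exact hF₁ μ hμ₀
  have hG₁ : ∀ μ, μ ≠ 0 → G.coeff μ = 0 := by
    intro μ hμ
    by_cases hμ₁ : μ 1 = 0
    · have hμ₀ : μ 0 ≠ 0 := fun h₀ => hμ (by ext i; fin_cases i <;> simpa)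
      convert H.swap.coeff_eq_zero hinj hμ₀
      ext i; fin_cases i <;> simp [hμ₁]
    · exact hG₀ μ hμ₁
  have h₀₀ : F.coeff 0 = G.coeff 0 := by
    have h := H.coeff_zero_eq hinj
    rwa [show (![0, 0] : Fin 2 → ℤ) = 0 by ext i; fin_cases i <;> rfl] at h
  exact ⟨F.coeff 0, eq_single_zero_of_coeff_eq_zero hF₀,
    h₀₀ ▸ eq_single_zero_of_coeff_eq_zero hG₁⟩

lemma brk_mul_brk_xvec₀₁ (p : ℂ) {b : ℂ} (hb : b ≠ 0) :
    brk p (p * b) (xvec 0 - xvec 1) * brk p b (xvec 1 - xvec 0) =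
      particularSolution p ![2, -2] + single 0 (brkConst p b) := by
  rw [← neg_sub (xvec 0), brk_mul_brk_neg p hb]
  congr 2
  ext j; fin_cases j <;> rfl

lemma brk_mul_brk_xvec₁₀ (p : ℂ) {b : ℂ} (hb : b ≠ 0) :
    brk p (p * b) (xvec 1 - xvec 0) * brk p b (xvec 0 - xvec 1) =
      particularSolution p (-![2, -2]) + single 0 (brkConst p b) := by
  rw [← neg_sub (xvec 1), brk_mul_brk_neg p hb]
  congr 2
  ext j; fin_cases j <;> rfl

lemma shiftSystem_fin_two_iff (a : Fin 2 → Fin 2 → ℤ) (q : Fin 2 → ℂˣ)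
    (φ₀ φ₁ : LaurentAlg (Fin 2)) :
    ShiftSystem a q ![φ₀, φ₁] ↔
      zeta (q 0) 0 φ₀ - φ₀ = brk (q 0) 1 (fun j => a j 0) ∧
        zeta (q 1) 1 φ₁ - φ₁ = brk (q 1) 1 (fun j => a j 1) ∧
        φ₀ * φ₁ = zeta (q 1)⁻¹ 1 φ₀ * zeta (q 0)⁻¹ 0 φ₁ := by
  constructor
  · rintro ⟨h, hmul⟩
    exact ⟨h 0, h 1, hmul 0 1 (by decide)⟩
  · rintro ⟨h₀, h₁, hmul⟩
    refine ⟨fun i => ?_, fun i j hij => ?_⟩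
    · fin_cases i
      exacts [h₀, h₁]
    · fin_cases i <;> fin_cases j
      exacts [absurd rfl hij, hmul, by simpa [mul_comm] using hmul, absurd rfl hij]

lemma shiftSystem_particularSolution_add_iff {p : ℂˣ} (hp : (p : ℂ) ≠ (p : ℂ)⁻¹) (F G : LaurentAlg (Fin 2)) :
    ShiftSystem (fun i j : Fin 2 => if i = j then 2 else -2) (fun _ => p)
        ![particularSolution p ![2, -2] + F, particularSolution p (-![2, -2]) + G] ↔
      zeta p 0 F = F ∧ zeta p 1 G = G ∧
        (particularSolution p ![2, -2] + F) * (particularSolution p (-![2, -2]) + G) =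
          (particularSolution p (-![2, -2]) + zeta p⁻¹ 1 F) *
            (particularSolution p ![2, -2] + zeta p⁻¹ 0 G) := by
  have hy₀ : (fun j : Fin 2 => if j = 0 then (2 : ℤ) else -2) = ![2, -2] := by
    ext j; fin_cases j <;> rfl
  have hy₁ : (fun j : Fin 2 => if j = 1 then (2 : ℤ) else -2) = -![2, -2] := by
    ext j; fin_cases j <;> rfl
  rw [shiftSystem_fin_two_iff]
  simp only [hy₀, hy₁]
  rw [zeta_sub_self_eq_brk_iff (i := 0) hp rfl F, zeta_sub_self_eq_brk_iff (i := 1) hp rfl G,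
    map_add, map_add, zeta_inv_particularSolution (j := 1) p rfl,
    zeta_inv_particularSolution (j := 0) p rfl, neg_neg]

/-- For the affine Cartan matrix of type `A_1^{(1)}` (indexed by `Fin 2`,
`a_{01} = a_{10} = -2`, `q_0 = q_1 = p`), a pair `(φ_0, φ_1)` solves the shiftability
system if and only if `φ_0 = {p·b·x_0x_1⁻¹}·{b·x_0⁻¹x_1}` and
`φ_1 = {p·b·x_0⁻¹x_1}·{b·x_0x_1⁻¹}` for some `b ∈ ℂˣ`. -/
theorem shiftability_A1_aff_iff (p : ℂˣ) (hp : ∀ n : ℕ, 0 < n → p ^ n ≠ 1)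
    (φ₀ φ₁ : LaurentAlg (Fin 2)) :
    ShiftSystem (fun i j : Fin 2 => if i = j then 2 else -2) (fun _ : Fin 2 => p) ![φ₀, φ₁] ↔
      ∃ b : ℂˣ,
        φ₀ = brk (p : ℂ) ((p : ℂ) * (b : ℂ)) (xvec 0 - xvec 1) *
            brk (p : ℂ) (b : ℂ) (xvec 1 - xvec 0) ∧
        φ₁ = brk (p : ℂ) ((p : ℂ) * (b : ℂ)) (xvec 1 - xvec 0) *
            brk (p : ℂ) (b : ℂ) (xvec 0 - xvec 1) := by
  have hfin : ¬IsOfFinOrder p := by simpa [isOfFinOrder_iff_pow_eq_one] using hp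
  have hp' : (p : ℂ) ≠ (p : ℂ)⁻¹ := by
    simpa using (injective_val_zpow hfin).ne (show (1 : ℤ) ≠ -1 by norm_num)
  obtain ⟨F, rfl⟩ : ∃ F, φ₀ = particularSolution p ![2, -2] + F := ⟨_, (add_sub_cancel _ _).symm⟩
  obtain ⟨G, rfl⟩ : ∃ G, φ₁ = particularSolution p (-![2, -2]) + G :=
    ⟨_, (add_sub_cancel _ _).symm⟩
  simp only [shiftSystem_particularSolution_add_iff hp', brk_mul_brk_xvec₀₁, brk_mul_brk_xvec₁₀, ne_eq,
    Units.ne_zero, not_false_eq_true, add_right_inj]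
  constructor
  · rintro ⟨hF, hG, h⟩
    obtain ⟨c, rfl, rfl⟩ := exists_eq_single_zero_of_mul_eq hfin hF hG h
    obtain ⟨b, hb, rfl⟩ := exists_brkConst_eq p.ne_zero hp' c
    exact ⟨Units.mk0 b hb, rfl, rfl⟩
  · rintro ⟨b, rfl, rfl⟩
    refine ⟨zeta_single_zero _ _ _, zeta_single_zero _ _ _, ?_⟩
    rw [zeta_single_zero, zeta_single_zero, mul_comm]

end
end

section
/- Let n ≥ 2, I = {0,1,…,n}, and let A be the affine Cartan matrix of type A_n^{(1)}: a_{ii} = 2, a_{ij} = -1 if i − j ≡ ±1 (mod n+1), and a_{ij} = 0 otherwise; set q_i = p for all i ∈ I. Define z_i = x_{i-1}^{-1} x_i for 1 ≤ i ≤ n and z_0 = x_0 x_n^{-1} (so that y_i = z_i z_{i+1}^{-1}, indices read modulo n+1). Then for every b ∈ ℂ^×, the tuple φ_i = {p·b·z_i}·{b·z_{i+1}} (i ∈ I, indices modulo n+1) satisfies the shiftability system for A. -/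
/-!
`ζ_i` multiplies the coefficient `c` of a bracket `{c x^μ}` by `p^{-μ_i}`. Since `z_i` has
exponent `1` and `z_{i+1}` exponent `-1` at `x_i`, `ζ_i` swaps the coefficients `p b` and `b` in
`φ_i = {p b z_i}{b z_{i+1}}`, and the identity `{b u}{p b v} - {p b u}{b v} = {u v⁻¹}` yields the
first equation, as `z_i z_{i+1}⁻¹ = y_i`. For non-adjacent `i ≠ j`, `ζ_j⁻¹` fixes `φ_i` and `ζ_i⁻¹`
fixes `φ_j`; for `j = i + 1` both sides of the second equation are the product of the brackets
`{p b z_i}, {b z_{i+1}}, {p b z_{i+1}}, {b z_{i+2}}`.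
-/

noncomputable section

lemma zeta_mono {ι : Type*} (c : ℂˣ) (i : ι) (μ : ι → ℤ) :
    zeta c i (mono μ) = ((c ^ (-μ i) : ℂˣ) : ℂ) • mono μ := by
  simp [zeta, mono, AddMonoidAlgebra.lift_single, zetaHom]

lemma zeta_brk {ι : Type*} (c : ℂˣ) (i : ι) (s e : ℂ) (μ : ι → ℤ) :
    zeta c i (brk s e μ) = brk s ((c ^ (-μ i) : ℂˣ) * e) μ := by
  simp only [brk, map_smul, map_sub, zeta_mono, smul_smul, Pi.neg_apply, neg_neg, mul_inv,
    ← Units.val_inv_eq_inv_val, ← zpow_neg]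
  rw [mul_comm e, mul_comm e⁻¹]

lemma zeta_brk_of_apply_eq_zero {ι : Type*} (c : ℂˣ) {i : ι} (s e : ℂ) {μ : ι → ℤ}
    (hμ : μ i = 0) : zeta c i (brk s e μ) = brk s e μ := by
  rw [zeta_brk, hμ, neg_zero, zpow_zero, Units.val_one, one_mul]

lemma brk_mul_sub_mul {ι : Type*} (P : ℂ) {B : ℂ} (hB : B ≠ 0) (u v : ι → ℤ) :
    brk P B u * brk P (P * B) v - brk P (P * B) u * brk P B v = brk P 1 (u - v) := by
  have hw : (P - P⁻¹)⁻¹ * (P - P⁻¹)⁻¹ * (P - P⁻¹) = (P - P⁻¹)⁻¹ := by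
    simpa using mul_self_mul_inv (P - P⁻¹)⁻¹
  have hBB : B * B⁻¹ = 1 := mul_inv_cancel₀ hB
  have h₁ : u + -v = u - v := by abel
  have h₂ : -u + v = -(u - v) := by abel
  simp only [brk, smul_sub, sub_mul, mul_sub, smul_mul_smul_comm, ← mono_add, h₁, h₂]
  match_scalars
  · ring
  · linear_combination -hw - (P - P⁻¹)⁻¹ * (P - P⁻¹)⁻¹ * (P - P⁻¹) * hBB
  · linear_combination hw + (P - P⁻¹)⁻¹ * (P - P⁻¹)⁻¹ * (P - P⁻¹) * hBB
  · ring

section Cycle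

variable {G : Type*} [AddCommGroup G] [DecidableEq G]

/-- The Cartan matrix of the cycle through `G` with step `s`; for `G = ℤ/(n+1)` and `s = 1` this
is the affine matrix of type `A_n^{(1)}`. -/
def cycleCartan (s : G) (i j : G) : ℤ :=
  if i = j then 2 else if j = i + s ∨ i = j + s then -1 else 0

/-- The exponent vector of `z_i = x_{i-s}⁻¹ x_i`. -/
def zvec (s i : G) : G → ℤ := xvec i - xvec (i - s)

def cycleSolution (p b : ℂ) (s i : G) : LaurentAlg G :=
  brk p (p * b) (zvec s i) * brk p b (zvec s (i + s))

variable {s : G}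

lemma zvec_apply (i j : G) :
    zvec s i j = (if j = i then 1 else 0) - (if j = i - s then 1 else 0) :=
  rfl

lemma zvec_add_self (i : G) : zvec s (i + s) = xvec (i + s) - xvec i := by
  rw [zvec, add_sub_cancel_right]

lemma zvec_apply_of_ne {i j : G} (h₁ : j ≠ i) (h₂ : j ≠ i - s) : zvec s i j = 0 := by
  simp [zvec_apply, h₁, h₂]

lemma zvec_apply_self (hs : s ≠ 0) (i : G) : zvec s i i = 1 := by
  simp [zvec_apply, hs, eq_sub_iff_add_eq]

lemma zvec_add_apply_self (hs : s ≠ 0) (i : G) : zvec s (i + s) i = -1 := by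
  simp [zvec_apply, hs]

lemma zvec_apply_add (hs : s ≠ 0) (hs2 : s + s ≠ 0) (i : G) : zvec s i (i + s) = 0 := by
  simp [zvec_apply, hs, eq_sub_iff_add_eq, add_assoc, hs2]

lemma zvec_sub_zvec_add (hs : s ≠ 0) (hs2 : s + s ≠ 0) (i : G) :
    zvec s i - zvec s (i + s) = fun j => cycleCartan s j i := by
  funext j
  simp only [Pi.sub_apply, zvec_apply, cycleCartan, add_sub_cancel_right]
  grind

lemma zeta_cycleSolution_of_ne (c p : ℂˣ) (b : ℂ) {i j : G} (h₁ : j ≠ i) (h₂ : j ≠ i - s)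
    (h₃ : j ≠ i + s) : zeta c j (cycleSolution p b s i) = cycleSolution p b s i := by
  have h₄ : j ≠ i + s - s := by rwa [add_sub_cancel_right]
  rw [cycleSolution, map_mul, zeta_brk_of_apply_eq_zero _ _ _ (zvec_apply_of_ne h₁ h₂),
    zeta_brk_of_apply_eq_zero _ _ _ (zvec_apply_of_ne h₃ h₄)]

variable (hs : s ≠ 0) (hs2 : s + s ≠ 0)
include hs hs2

lemma cycleSolution_zeta_sub_self (p : ℂˣ) {b : ℂ} (hb : b ≠ 0) (i : G) :
    zeta p i (cycleSolution p b s i) - cycleSolution p b s i =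
      brk p 1 (fun j => cycleCartan s j i) := by
  rw [← zvec_sub_zvec_add hs hs2, ← brk_mul_sub_mul _ hb, cycleSolution, map_mul, zeta_brk,
    zeta_brk, zvec_apply_self hs, zvec_add_apply_self hs]
  simp

lemma cycleSolution_mul_cycleSolution_add (p : ℂˣ) (b : ℂ) (i : G) :
    cycleSolution p b s i * cycleSolution p b s (i + s) =
      zeta p⁻¹ (i + s) (cycleSolution p b s i) * zeta p⁻¹ i (cycleSolution p b s (i + s)) := by
  have h : zvec s (i + s + s) i = 0 :=
    zvec_apply_of_ne (by simp [add_assoc, hs2]) (by simp [hs])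
  simp only [cycleSolution, map_mul, zeta_brk, zvec_apply_add hs hs2, zvec_apply_self hs,
    zvec_add_apply_self hs, h, neg_zero, zpow_zero, Units.val_one, one_mul, Int.reduceNeg,
    neg_neg, zpow_neg, zpow_one, inv_inv, Units.val_inv_eq_inv_val, ne_eq, Units.ne_zero,
    not_false_eq_true, inv_mul_cancel_left₀]
  ring

lemma cycleSolution_shiftSystem (p : ℂˣ) {b : ℂ} (hb : b ≠ 0) :
    ShiftSystem (cycleCartan s) (fun _ => p) (cycleSolution p b s) := by
  refine ⟨cycleSolution_zeta_sub_self hs hs2 p hb, fun i j hij => ?_⟩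
  by_cases hj : j = i + s
  · subst hj
    exact cycleSolution_mul_cycleSolution_add hs hs2 p b i
  by_cases hi : i = j + s
  · subst hi
    rw [mul_comm, mul_comm (zeta _ _ _)]
    exact cycleSolution_mul_cycleSolution_add hs hs2 p b j
  rw [zeta_cycleSolution_of_ne _ _ _ (Ne.symm hij) (by rwa [Ne, eq_sub_iff_add_eq, eq_comm]) hj,
    zeta_cycleSolution_of_ne _ _ _ hij (by rwa [Ne, eq_sub_iff_add_eq, eq_comm]) hi]

end Cycle

theorem shiftability_An_aff_general (n : ℕ) (hn : 2 ≤ n)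
    (p : ℂˣ) (b : ℂˣ) :
    ShiftSystem
      (fun i j : Fin (n + 1) => if i = j then 2 else if j = i + 1 ∨ i = j + 1 then -1 else 0)
      (fun _ : Fin (n + 1) => p)
      (fun i : Fin (n + 1) =>
        brk (p : ℂ) ((p : ℂ) * (b : ℂ)) (xvec i - xvec (i - 1)) *
          brk (p : ℂ) (b : ℂ) (xvec (i + 1) - xvec i)) := by
  have h1 : (1 : Fin (n + 1)) ≠ 0 := by rw [Ne, Fin.one_eq_zero_iff]; omega
  have h2 : (1 : Fin (n + 1)) + 1 ≠ 0 := by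
    simp [Fin.ext_iff, Fin.val_add, Nat.mod_eq_of_lt (show 2 < n + 1 by omega)]
  convert cycleSolution_shiftSystem h1 h2 p b.ne_zero using 1
  · rfl
  · funext i
    rw [cycleSolution, zvec_add_self]
    rfl

/-- For the affine Cartan matrix of type `A_n^{(1)}`, `n ≥ 2` (indexed by
`Fin (n+1)` with adjacency mod `n+1`, all `q_i = p`), with `z_i = x_{i-1}⁻¹ x_i`
(indices mod `n+1`, so `z_0 = x_0 x_n⁻¹`), the tuple `φ_i = {p·b·z_i}·{b·z_{i+1}}`
(indices mod `n+1`) solves the shiftability system, for every `b ∈ ℂˣ`. -/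
theorem shiftability_An_aff (n : ℕ) (hn : 2 ≤ n)
    (p : ℂˣ) (hp : ∀ m : ℕ, 0 < m → p ^ m ≠ 1) (b : ℂˣ) :
    ShiftSystem
      (fun i j : Fin (n + 1) => if i = j then 2 else if j = i + 1 ∨ i = j + 1 then -1 else 0)
      (fun _ : Fin (n + 1) => p)
      (fun i : Fin (n + 1) =>
        brk (p : ℂ) ((p : ℂ) * (b : ℂ)) (xvec i - xvec (i - 1)) *
          brk (p : ℂ) (b : ℂ) (xvec (i + 1) - xvec i)) :=
  shiftability_An_aff_general n hn p b

end
end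

section
/- Let A = (a_{ij})_{i,j∈I} be a symmetrizable generalized Cartan matrix, with positive integers (e_k)_{k∈I} satisfying e_k a_{kl} = e_l a_{lk} for all k, l ∈ I, and set q_k = p^{e_k}. Let (φ_k)_{k∈I} be a solution of the shiftability system for A, and for each k write φ_k = β_k^+ y_k + φ_{k,0} + β_k^- y_k^{-1} with φ_{k,0} ∈ 𝒜_{x_k} and β_k^± = −q_k^{±1}·(q_k − q_k^{-1})^{-2} (such a decomposition exists and is unique). Suppose j ∈ I is connected to two distinct nodes i, l ∈ I \ {j} (that is, a_{ji} < 0 and a_{jl} < 0), and suppose φ_{j,0} ≠ 0. Then for every exponent vector μ ∈ ℤ^I in the support of φ_{j,0} (i.e. the monomial ∏_k x_k^{μ_k} occurs in φ_{j,0} with nonzero coefficient), one has μ_i · μ_l ≤ 0. -/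
noncomputable section

/-- The decomposition `β_k⁺·y_k + φ_0 + β_k⁻·y_k⁻¹` of Lemma A.1,
with `β_k^± = −q_k^{±1}(q_k − q_k⁻¹)⁻²`. -/
def phiDecomp {ι : Type*} (a : ι → ι → ℤ) (q : ℂˣ) (k : ι) (φ₀ : LaurentAlg ι) :
    LaurentAlg ι :=
  (-(q : ℂ) * (((q : ℂ) - (q : ℂ)⁻¹) ^ 2)⁻¹) • mono (fun l => a l k) + φ₀ +
    (-(q : ℂ)⁻¹ * (((q : ℂ) - (q : ℂ)⁻¹) ^ 2)⁻¹) • mono (-(fun l => a l k))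

/-!
Compare coefficients in `φ_u φ_v = ζ_v⁻¹(φ_u) ζ_u⁻¹(φ_v)`: a monomial `x^μ` of `φ_u` and a
monomial `x^ν` of `φ_v` whose twist `q_v^{μ_v} q_u^{ν_u}` is not `1` must be cancelled by another
such pair with the same product `x^{μ+ν}`. At the extreme `x_t`-degree of `φ_s` only the top
term `β_t⁺ y_t` of `φ_t` can pair with `φ_s`, which confines the `x_t`-degrees of `φ_s` to
`[a_{ts}, -a_{ts}]`.

At the branch node `j`, a monomial `x^ν` of `φ_{j,0}` with `ν_l > a_{lj}` and `ν_i > a_{ij}` sits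
opposite `β_l⁻ y_l⁻¹` in the relation for `(l, j)`; the degree bounds force its partner to be a
monomial of `φ_{j,0}` of `x_l`-degree `ν_l - 2` with the same two properties, so no such `ν` can
exist. Two negative exponents reduce to two positive ones under the symmetry `x ↦ x⁻¹`, `p ↦ p⁻¹`
of the system.
-/

namespace Shiftability

open Finset AddMonoidAlgebra

variable {ι : Type*}

theorem coeff_zeta (c : ℂˣ) (i : ι) (f : LaurentAlg ι) (γ : ι → ℤ) :
    (zeta c i f).coeff γ = ((c ^ (-γ i) : ℂˣ) : ℂ) * f.coeff γ := by
  classical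
  induction f using AddMonoidAlgebra.induction_linear with
  | zero => simp
  | add f g hf hg => simp only [map_add, coeff_add, Finsupp.add_apply, hf, hg, mul_add]
  | single μ b =>
    simp only [zeta, lift_single, zetaHom, MonoidHom.coe_mk, OneHom.coe_mk, toAdd_ofAdd, mono,
      coeff_smul_apply, coeff_single, Finsupp.single_apply, smul_eq_mul]
    split_ifs with h <;> simp [h, mul_comm]

theorem support_zeta (c : ℂˣ) (i : ι) (f : LaurentAlg ι) :
    (zeta c i f).coeff.support = f.coeff.support := by
  ext γ
  simp [coeff_zeta, zpow_ne_zero, Units.ne_zero]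

theorem coeff_mul_eq_sum (f g : LaurentAlg ι) (x : ι → ℤ) :
    (f * g).coeff x = ∑ μ ∈ f.coeff.support, f.coeff μ * g.coeff (x - μ) := by
  simp [coeff_mul_apply_left, Finsupp.sum, neg_add_eq_sub]

theorem exists_ne_of_mul_eq_zeta_mul {c d : ℂˣ} {u v : ι} {f g : LaurentAlg ι}
    (h : f * g = zeta c⁻¹ v f * zeta d⁻¹ u g) {x μ₀ : ι → ℤ} (hμ₀ : μ₀ ∈ f.coeff.support)
    (hg : x - μ₀ ∈ g.coeff.support) (hcd : c ^ μ₀ v * d ^ (x - μ₀) u ≠ 1) :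
    ∃ μ ∈ f.coeff.support, μ ≠ μ₀ ∧ x - μ ∈ g.coeff.support ∧ c ^ μ v * d ^ (x - μ) u ≠ 1 := by
  set term : (ι → ℤ) → ℂ := fun μ =>
    f.coeff μ * g.coeff (x - μ) * (1 - ((c ^ μ v * d ^ (x - μ) u : ℂˣ) : ℂ))
  have hsum : ∑ μ ∈ f.coeff.support, term μ = 0 := by
    have hx := congr(($h).coeff x)
    rw [coeff_mul_eq_sum, coeff_mul_eq_sum, support_zeta, ← sub_eq_zero, ← sum_sub_distrib] at hx
    rw [← hx]
    refine sum_congr rfl fun μ _ => ?_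
    simp only [term, coeff_zeta, inv_zpow', neg_neg, Units.val_mul]
    ring
  by_contra! hother
  have hterm : term μ₀ ≠ 0 := mul_ne_zero (mul_ne_zero (Finsupp.mem_support_iff.mp hμ₀)
    (Finsupp.mem_support_iff.mp hg)) (sub_ne_zero.mpr fun h1 => hcd (Units.val_eq_one.mp h1.symm))
  refine hterm (hsum ▸ (sum_eq_single μ₀ (fun μ hμ hne => ?_) (absurd hμ₀)).symm)
  by_cases hgμ : x - μ ∈ g.coeff.support
  · simp only [term, hother μ hμ hne hgμ, Units.val_one, sub_self, mul_zero]
  · simp [term, Finsupp.notMem_support_iff.mp hgμ]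

def reflect : LaurentAlg ι ≃ₐ[ℂ] LaurentAlg ι := domCongr ℂ ℂ (AddEquiv.neg (ι → ℤ))

theorem coeff_reflect (f : LaurentAlg ι) (γ : ι → ℤ) : (reflect f).coeff γ = f.coeff (-γ) :=
  coeff_domCongr _ _ _

theorem mem_support_reflect {f : LaurentAlg ι} {γ : ι → ℤ} :
    γ ∈ (reflect f).coeff.support ↔ -γ ∈ f.coeff.support := by
  simp [coeff_reflect]

theorem reflect_mono (μ : ι → ℤ) : reflect (mono μ) = mono (-μ) :=
  domCongr_single _ _ _

theorem reflect_zeta (c : ℂˣ) (i : ι) (f : LaurentAlg ι) :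
    reflect (zeta c i f) = zeta c⁻¹ i (reflect f) := by
  ext γ
  simp [coeff_reflect, coeff_zeta]

theorem reflect_phiDecomp (a : ι → ι → ℤ) (q : ℂˣ) (k : ι) (φ₀ : LaurentAlg ι) :
    reflect (phiDecomp a q k φ₀) = phiDecomp a q⁻¹ k (reflect φ₀) := by
  have hsq : ((q : ℂ)⁻¹ - q) ^ 2 = ((q : ℂ) - (q : ℂ)⁻¹) ^ 2 := by ring
  simp only [phiDecomp, map_add, map_smul, reflect_mono, neg_neg, Units.val_inv_eq_inv_val, hsq,
    inv_inv]
  abel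

/-- The exponent vector of `y_k = ∏_m x_m^{a m k}`. -/
def simpleRoot (a : ι → ι → ℤ) (k : ι) : ι → ℤ := fun m => a m k

@[simp]
theorem simpleRoot_apply (a : ι → ι → ℤ) (k m : ι) : simpleRoot a k m = a m k := rfl

theorem mem_support_phiDecomp {a : ι → ι → ℤ} {q : ℂˣ} {k : ι} {φ₀ : LaurentAlg ι}
    (hq : (q : ℂ) - (q : ℂ)⁻¹ ≠ 0) (hk : a k k = 2) (h₀ : ∀ μ ∈ φ₀.coeff.support, μ k = 0)
    {γ : ι → ℤ} :
    γ ∈ (phiDecomp a q k φ₀).coeff.support ↔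
      γ = simpleRoot a k ∨ γ = -simpleRoot a k ∨ γ ∈ φ₀.coeff.support := by
  classical
  have hφ₀ : ∀ γ : ι → ℤ, γ k ≠ 0 → φ₀.coeff γ = 0 := fun γ hγ =>
    Finsupp.notMem_support_iff.mp (mt (h₀ γ) hγ)
  have hα : simpleRoot a k ≠ -simpleRoot a k := fun h => by
    have := congr_fun h k
    simp [hk] at this
  have hq₀ : (q : ℂ) ≠ 0 := q.ne_zero
  rw [Finsupp.mem_support_iff]
  simp only [phiDecomp, coeff_add, coeff_smul, mono, coeff_single, Finsupp.add_apply,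
    Finsupp.smul_apply, smul_eq_mul, Finsupp.single_apply]
  rw [show (fun l => a l k) = simpleRoot a k from rfl]
  by_cases h1 : γ = simpleRoot a k
  · subst h1
    simp [hα.symm, hφ₀ _ (by simp [hk] : simpleRoot a k k ≠ 0), hq, hq₀]
  by_cases h2 : γ = -simpleRoot a k
  · subst h2
    simp [hα, hφ₀ _ (by simp [hk] : (-simpleRoot a k) k ≠ 0), hq, hq₀]
  simp [h1, h2, Ne.symm h1, Ne.symm h2]

structure DecomposedSolution (a : ι → ι → ℤ) (e : ι → ℕ) (p : ℂˣ) (φ φ₀ : ι → LaurentAlg ι) :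
    Prop where
  diag : ∀ k, a k k = 2
  symmetrizer_pos : ∀ k, 0 < e k
  symmetrizer_mul_comm : ∀ k l, (e k : ℤ) * a k l = e l * a l k
  not_isOfFinOrder : ¬IsOfFinOrder p
  eq_phiDecomp : ∀ k, φ k = phiDecomp a (p ^ e k) k (φ₀ k)
  apply_self_of_mem_support : ∀ k, ∀ μ ∈ (φ₀ k).coeff.support, μ k = 0
  mul_eq_zeta_mul_zeta : ∀ u v, u ≠ v →
    φ u * φ v = zeta (p ^ e v)⁻¹ v (φ u) * zeta (p ^ e u)⁻¹ u (φ v)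

namespace DecomposedSolution

variable {a : ι → ι → ℤ} {e : ι → ℕ} {p : ℂˣ} {φ φ₀ : ι → LaurentAlg ι}
  (h : DecomposedSolution a e p φ φ₀)
include h

theorem zpow_ne_one {n : ℤ} (hn : n ≠ 0) : p ^ n ≠ 1 := fun h1 =>
  h.not_isOfFinOrder (isOfFinOrder_iff_zpow_eq_one.2 ⟨n, hn, h1⟩)

theorem mem_support_iff (k : ι) {γ : ι → ℤ} :
    γ ∈ (φ k).coeff.support ↔
      γ = simpleRoot a k ∨ γ = -simpleRoot a k ∨ γ ∈ (φ₀ k).coeff.support := by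
  rw [h.eq_phiDecomp k]
  refine mem_support_phiDecomp (fun hq => ?_) (h.diag k) (h.apply_self_of_mem_support k)
  have hq₁ : ((p ^ (2 * e k : ℤ) : ℂˣ) : ℂ) = 1 := by
    rw [mul_comm, zpow_mul, zpow_natCast, zpow_two, Units.val_mul]
    nth_rw 1 [sub_eq_zero.mp hq]
    exact inv_mul_cancel₀ (Units.ne_zero _)
  exact h.zpow_ne_one (by have := h.symmetrizer_pos k; omega) (Units.val_eq_one.mp hq₁)

theorem exists_partner {u v : ι} (huv : u ≠ v) {x μ₀ : ι → ℤ}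
    (hμ₀ : μ₀ ∈ (φ u).coeff.support) (hν₀ : x - μ₀ ∈ (φ v).coeff.support)
    (hw : (e v : ℤ) * μ₀ v + e u * (x - μ₀) u ≠ 0) :
    ∃ μ ∈ (φ u).coeff.support, μ ≠ μ₀ ∧ x - μ ∈ (φ v).coeff.support ∧
      (e v : ℤ) * μ v + e u * (x - μ) u ≠ 0 := by
  have hpow : ∀ m n : ℤ, (p ^ e v) ^ m * (p ^ e u) ^ n = p ^ ((e v : ℤ) * m + e u * n) :=
    fun m n => by simp only [zpow_add, zpow_mul, zpow_natCast]
  obtain ⟨μ, hμ, hne, hν, hpow_ne⟩ := exists_ne_of_mul_eq_zeta_mul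
    (h.mul_eq_zeta_mul_zeta u v huv) hμ₀ hν₀ (hpow _ _ ▸ h.zpow_ne_one hw)
  exact ⟨μ, hμ, hne, hν, fun hw₀ => hpow_ne (by rw [hpow, hw₀, zpow_zero])⟩

theorem map_reflect :
    DecomposedSolution a e p⁻¹ (fun k => reflect (φ k)) (fun k => reflect (φ₀ k)) where
  diag := h.diag
  symmetrizer_pos := h.symmetrizer_pos
  symmetrizer_mul_comm := h.symmetrizer_mul_comm
  not_isOfFinOrder := isOfFinOrder_inv_iff.not.2 h.not_isOfFinOrder
  eq_phiDecomp k := by rw [h.eq_phiDecomp k, reflect_phiDecomp, inv_pow]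
  apply_self_of_mem_support k μ hμ := by
    simpa using h.apply_self_of_mem_support k (-μ) (mem_support_reflect.1 hμ)
  mul_eq_zeta_mul_zeta u v huv := by
    rw [← map_mul, h.mul_eq_zeta_mul_zeta u v huv, map_mul, reflect_zeta, reflect_zeta]
    simp only [inv_pow, inv_inv]

theorem apply_le_of_mem_support {s t : ι} (hts : t ≠ s) {ν : ι → ℤ}
    (hν : ν ∈ (φ s).coeff.support) : ν t ≤ -a t s := by
  by_contra! hνt
  obtain ⟨κ, hκ, hmax⟩ := (φ s).coeff.support.exists_max_image (· t) ⟨ν, hν⟩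
  have hκt : -a t s < κ t := hνt.trans_le (hmax ν hν)
  have hw : (e s : ℤ) * a s t + e t * κ t ≠ 0 := by
    have := h.symmetrizer_pos t
    rw [h.symmetrizer_mul_comm s t, ← mul_add]
    exact mul_ne_zero (by omega) (by omega)
  obtain ⟨μ, hμ, hμα, hκμ, -⟩ := h.exists_partner hts (x := κ + simpleRoot a t)
    ((h.mem_support_iff t).2 (Or.inl rfl)) (by simpa using hκ) (by simpa using hw)
  have hμt : μ t ≤ 0 := by
    rcases (h.mem_support_iff t).1 hμ with rfl | rfl | hμ₀
    · exact absurd rfl hμα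
    · simp [h.diag t]
    · exact (h.apply_self_of_mem_support t μ hμ₀).le
  have := hmax _ hκμ
  simp only [Pi.sub_apply, Pi.add_apply, simpleRoot_apply, h.diag t] at this
  omega

theorem le_apply_of_mem_support {s t : ι} (hts : t ≠ s) {ν : ι → ℤ}
    (hν : ν ∈ (φ s).coeff.support) : a t s ≤ ν t := by
  have := h.map_reflect.apply_le_of_mem_support hts (ν := -ν)
    (mem_support_reflect.2 (by simpa using hν))
  simp only [Pi.neg_apply] at this
  omega

theorem exists_lt_of_mem_support {j l k : ι} (hlj : l ≠ j) (hkl : k ≠ l) (hjl : a j l < 0)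
    {ν : ι → ℤ} (hν : ν ∈ (φ₀ j).coeff.support) (hνl : a l j < ν l) (hνk : a k j < ν k) :
    ∃ ν' ∈ (φ₀ j).coeff.support, ν' l < ν l ∧ a l j < ν' l ∧ a k j < ν' k := by
  have hνj := h.apply_self_of_mem_support j ν hν
  have hw : (e j : ℤ) * (-a j l) + e l * ν l ≠ 0 := by
    have := h.symmetrizer_pos l
    rw [mul_neg, h.symmetrizer_mul_comm j l, ← mul_neg, ← mul_add]
    exact mul_ne_zero (by omega) (by omega)
  obtain ⟨μ, hμ, hμα, hν', hw'⟩ := h.exists_partner hlj (x := ν - simpleRoot a l)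
    ((h.mem_support_iff l).2 (Or.inr (Or.inl rfl)))
    (by simpa using (h.mem_support_iff j).2 (Or.inr (Or.inr hν))) (by simpa using hw)
  set ν' := ν - simpleRoot a l - μ
  have hμj := h.apply_le_of_mem_support hlj.symm hμ
  have hμk := h.apply_le_of_mem_support hkl hμ
  have hν'j : 0 ≤ ν' j := by simp only [ν', Pi.sub_apply, simpleRoot_apply]; omega
  have hν'k : a k j < ν' k := by simp only [ν', Pi.sub_apply, simpleRoot_apply]; omega
  have hν'₀ : ν' ∈ (φ₀ j).coeff.support := by
    rcases (h.mem_support_iff j).1 hν' with hα | hα | hν'₀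
    · simp [hα] at hν'k
    · simp [hα, h.diag j] at hν'j
    · exact hν'₀
  have hμj_eq : μ j = -a j l := by
    have := h.apply_self_of_mem_support j ν' hν'₀
    simp only [ν', Pi.sub_apply, simpleRoot_apply] at this
    omega
  have hμl : μ l = 0 := by
    rcases (h.mem_support_iff l).1 hμ with hα | hα | hμ₀
    · simp only [hα, simpleRoot_apply] at hμj_eq
      omega
    · exact absurd hα hμα
    · exact h.apply_self_of_mem_support l μ hμ₀
  have hν'l : ν' l = ν l - 2 := by simp [ν', hμl, h.diag l]
  have hν'l_ne : ν' l ≠ a l j := fun heq => hw' (by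
    rw [hμj_eq, heq]
    linear_combination -h.symmetrizer_mul_comm j l)
  have hν'l_ge := h.le_apply_of_mem_support hlj hν'
  exact ⟨ν', hν'₀, by omega, lt_of_le_of_ne hν'l_ge hν'l_ne.symm, hν'k⟩

theorem apply_le_of_mem_support_of_lt {j l k : ι} (hlj : l ≠ j) (hkl : k ≠ l)
    (hjl : a j l < 0) {ν : ι → ℤ} (hν : ν ∈ (φ₀ j).coeff.support) (hνl : a l j < ν l) :
    ν k ≤ a k j := by
  by_contra! hνk
  obtain ⟨κ, hκ, hmin⟩ := ((φ₀ j).coeff.support.filter fun κ => a l j < κ l ∧ a k j < κ k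
    ).exists_min_image (· l) ⟨ν, mem_filter.2 ⟨hν, hνl, hνk⟩⟩
  rw [mem_filter] at hκ
  obtain ⟨κ', hκ', hlt, hl, hk⟩ := h.exists_lt_of_mem_support hlj hkl hjl hκ.1 hκ.2.1 hκ.2.2
  exact (hmin κ' (mem_filter.2 ⟨hκ', hl, hk⟩)).not_gt hlt

end DecomposedSolution

end Shiftability

theorem support_degrees_of_branch_node_general {ι : Type*}
    (a : ι → ι → ℤ)
    (hdiag : ∀ k, a k k = 2) (hoff : ∀ k l, k ≠ l → a k l ≤ 0)
    (e : ι → ℕ) (he : ∀ k, 0 < e k)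
    (hsym : ∀ k l, (e k : ℤ) * a k l = (e l : ℤ) * a l k)
    (p : ℂˣ) (hp : ∀ m : ℕ, 0 < m → p ^ m ≠ 1)
    (φ φ₀ : ι → LaurentAlg ι)
    (hsol : ShiftSystem a (fun k => p ^ (e k)) φ)
    (hdec : ∀ k, φ k = phiDecomp a (p ^ (e k)) k (φ₀ k))
    (hconst : ∀ k, ∀ μ ∈ (φ₀ k).coeff.support, μ k = 0)
    (i j l : ι) (hji : j ≠ i) (hjl : j ≠ l) (hil : i ≠ l)
    (hconn_l : a j l < 0) :
    ∀ μ ∈ (φ₀ j).coeff.support, μ i * μ l ≤ 0 := by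
  have h : Shiftability.DecomposedSolution a e p φ φ₀ :=
    { diag := hdiag, symmetrizer_pos := he, symmetrizer_mul_comm := hsym
      not_isOfFinOrder := fun hfin => by
        obtain ⟨m, hm, hpm⟩ := isOfFinOrder_iff_pow_eq_one.1 hfin
        exact hp m hm hpm
      eq_phiDecomp := hdec, apply_self_of_mem_support := hconst
      mul_eq_zeta_mul_zeta := hsol.2 }
  intro μ hμ
  have hij_nonpos := hoff i j hji.symm
  have hlj_nonpos := hoff l j hjl.symm
  by_contra! hpos
  rcases pos_and_pos_or_neg_and_neg_of_mul_pos hpos with ⟨hi, hl⟩ | ⟨hi, hl⟩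
  · have := h.apply_le_of_mem_support_of_lt hjl.symm hil hconn_l hμ (by omega)
    omega
  · have := h.map_reflect.apply_le_of_mem_support_of_lt hjl.symm hil hconn_l (ν := -μ)
      (Shiftability.mem_support_reflect.2 (by simpa using hμ)) (by simp only [Pi.neg_apply]; omega)
    simp only [Pi.neg_apply] at this
    omega

/-- Lemma A.3: let `A` be a symmetrizable GCM with symmetrizer `(e_k)`,
`q_k = p^{e_k}`, and let `(φ_k)` solve the shiftability system, written as
`φ_k = β_k⁺y_k + φ_{k,0} + β_k⁻y_k⁻¹` with `φ_{k,0} ∈ 𝒜_{x_k}`. If the node `j` is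
connected to two distinct other nodes `i` and `l` and `φ_{j,0} ≠ 0`, then every exponent
vector `μ` in the support of `φ_{j,0}` satisfies `μ_i · μ_l ≤ 0`. -/
theorem support_degrees_of_branch_node {ι : Type*} [Fintype ι] [DecidableEq ι]
    (a : ι → ι → ℤ)
    (hdiag : ∀ k, a k k = 2) (hoff : ∀ k l, k ≠ l → a k l ≤ 0)
    (hzero_iff : ∀ k l, a k l = 0 ↔ a l k = 0)
    (e : ι → ℕ) (he : ∀ k, 0 < e k)
    (hsym : ∀ k l, (e k : ℤ) * a k l = (e l : ℤ) * a l k)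
    (p : ℂˣ) (hp : ∀ m : ℕ, 0 < m → p ^ m ≠ 1)
    (φ φ₀ : ι → LaurentAlg ι)
    (hsol : ShiftSystem a (fun k => p ^ (e k)) φ)
    (hdec : ∀ k, φ k = phiDecomp a (p ^ (e k)) k (φ₀ k))
    (hconst : ∀ k, ∀ μ ∈ (φ₀ k).coeff.support, μ k = 0)
    (i j l : ι) (hji : j ≠ i) (hjl : j ≠ l) (hil : i ≠ l)
    (hconn_i : a j i < 0) (hconn_l : a j l < 0)
    (hne : φ₀ j ≠ 0) :
    ∀ μ ∈ (φ₀ j).coeff.support, μ i * μ l ≤ 0 :=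
  support_degrees_of_branch_node_general a hdiag hoff e he hsym p hp φ φ₀ hsol hdec hconst i j l hji
    hjl hil hconn_l

end
end

section
/- There exists a unique ℂ-algebra homomorphism ϑ : B_ν → B_ν such that ϑ(a⁺) = −a, ϑ(a) = a⁺, ϑ(k) = ν^{-1}·k⁻ and ϑ(k⁻) = ν·k, and ϑ is bijective (an algebra automorphism of B_ν). -/
noncomputable section

/-- Generators of the quantized oscillator algebra: `0 ↦ a⁺`, `1 ↦ a`, `2 ↦ k`, `3 ↦ k⁻`. -/
def G : Fin 4 → FreeAlgebra ℂ (Fin 4) := FreeAlgebra.ι ℂ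

/-- The defining relations of the quantized oscillator algebra `B_ν`:
`a·a⁺ − ν⁻¹·a⁺·a = k`, `a·a⁺ − ν·a⁺·a = k⁻`, `k·k⁻ = k⁻·k = 1`,
`k·a = ν⁻¹·a·k`, `k·a⁺ = ν·a⁺·k`. -/
inductive OscRel (ν : ℂ) : FreeAlgebra ℂ (Fin 4) → FreeAlgebra ℂ (Fin 4) → Prop
  | r1 : OscRel ν (G 1 * G 0 - ν⁻¹ • (G 0 * G 1)) (G 2)
  | r2 : OscRel ν (G 1 * G 0 - ν • (G 0 * G 1)) (G 3)
  | r3 : OscRel ν (G 2 * G 3) 1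
  | r4 : OscRel ν (G 3 * G 2) 1
  | r5 : OscRel ν (G 2 * G 1) (ν⁻¹ • (G 1 * G 2))
  | r6 : OscRel ν (G 2 * G 0) (ν • (G 0 * G 2))

/-- The quantized oscillator algebra `B_ν`, as the quotient of the free `ℂ`-algebra on
four generators `a⁺, a, k, k⁻` by the defining relations. -/
abbrev Osc (ν : ℂ) := RingQuot (OscRel ν)

/-- The creation generator `a⁺` of `B_ν`. -/
def ap (ν : ℂ) : Osc ν := RingQuot.mkAlgHom ℂ (OscRel ν) (G 0)

/-- The annihilation generator `a` of `B_ν`. -/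
def an (ν : ℂ) : Osc ν := RingQuot.mkAlgHom ℂ (OscRel ν) (G 1)

/-- The generator `k` of `B_ν`. -/
def kk (ν : ℂ) : Osc ν := RingQuot.mkAlgHom ℂ (OscRel ν) (G 2)

/-- The generator `k⁻` (the two-sided inverse of `k`) of `B_ν`. -/
def kinv (ν : ℂ) : Osc ν := RingQuot.mkAlgHom ℂ (OscRel ν) (G 3)

end

/-!
The assignment on generators respects the six defining relations (for the two relations involving
`k⁻` one first derives `k⁻·a = ν·a·k⁻` and `k⁻·a⁺ = ν⁻¹·a⁺·k⁻` by conjugating with `k⁻`), so it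
descends to an algebra endomorphism `ϑ` of `B_ν`. On generators `ϑ²` is `a⁺ ↦ -a⁺`, `a ↦ -a`,
`k ↦ k`, `k⁻ ↦ k⁻`, hence `ϑ⁴` fixes the generators, so `ϑ⁴ = id` and `ϑ` is an automorphism with
inverse `ϑ³`. Uniqueness holds because `a⁺, a, k, k⁻` generate `B_ν`.
-/

theorem mul_eq_inv_smul_mul_of_mul_eq_smul_mul {K A : Type*} [Field K] [Semiring A]
    [Algebra K A] {k k' a : A} {c : K} (hc : c ≠ 0) (hkk' : k * k' = 1) (hk'k : k' * k = 1)
    (h : k * a = c • (a * k)) : k' * a = c⁻¹ • (a * k') := by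
  have hak : a * k = c⁻¹ • (k * a) := by rw [h, smul_smul, inv_mul_cancel₀ hc, one_smul]
  calc k' * a = k' * (a * k) * k' := by rw [mul_assoc, mul_assoc, hkk', mul_one]
    _ = c⁻¹ • ((k' * k) * a * k') := by
        rw [hak, mul_smul_comm, smul_mul_assoc]
        simp only [mul_assoc]
    _ = c⁻¹ • (a * k') := by rw [hk'k, one_mul]

noncomputable section

namespace Osc

variable {ν : ℂ}

theorem an_mul_ap_sub_inv_smul : an ν * ap ν - ν⁻¹ • (ap ν * an ν) = kk ν := by
  simpa [ap, an, kk] using RingQuot.mkAlgHom_rel ℂ (OscRel.r1 (ν := ν))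

theorem an_mul_ap_sub_smul : an ν * ap ν - ν • (ap ν * an ν) = kinv ν := by
  simpa [ap, an, kinv] using RingQuot.mkAlgHom_rel ℂ (OscRel.r2 (ν := ν))

theorem kk_mul_kinv : kk ν * kinv ν = 1 := by
  simpa [kk, kinv] using RingQuot.mkAlgHom_rel ℂ (OscRel.r3 (ν := ν))

theorem kinv_mul_kk : kinv ν * kk ν = 1 := by
  simpa [kk, kinv] using RingQuot.mkAlgHom_rel ℂ (OscRel.r4 (ν := ν))

theorem kk_mul_an : kk ν * an ν = ν⁻¹ • (an ν * kk ν) := by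
  simpa [kk, an] using RingQuot.mkAlgHom_rel ℂ (OscRel.r5 (ν := ν))

theorem kk_mul_ap : kk ν * ap ν = ν • (ap ν * kk ν) := by
  simpa [kk, ap] using RingQuot.mkAlgHom_rel ℂ (OscRel.r6 (ν := ν))

theorem kinv_mul_an (hν : ν ≠ 0) : kinv ν * an ν = ν • (an ν * kinv ν) := by
  simpa using mul_eq_inv_smul_mul_of_mul_eq_smul_mul (inv_ne_zero hν) kk_mul_kinv kinv_mul_kk
    kk_mul_an

theorem kinv_mul_ap (hν : ν ≠ 0) : kinv ν * ap ν = ν⁻¹ • (ap ν * kinv ν) :=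
  mul_eq_inv_smul_mul_of_mul_eq_smul_mul hν kk_mul_kinv kinv_mul_kk kk_mul_ap

theorem algHom_ext {B : Type*} [Semiring B] [Algebra ℂ B] {f g : Osc ν →ₐ[ℂ] B}
    (hap : f (ap ν) = g (ap ν)) (han : f (an ν) = g (an ν))
    (hkk : f (kk ν) = g (kk ν)) (hkinv : f (kinv ν) = g (kinv ν)) : f = g := by
  apply RingQuot.ringQuot_ext'
  apply FreeAlgebra.hom_ext
  funext i
  fin_cases i
  exacts [hap, han, hkk, hkinv]

variable (ν) in
def thetaFree : FreeAlgebra ℂ (Fin 4) →ₐ[ℂ] Osc ν :=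
  FreeAlgebra.lift ℂ ![-an ν, ap ν, ν⁻¹ • kinv ν, ν • kk ν]

@[simp] theorem thetaFree_G0 : thetaFree ν (G 0) = -an ν := by simp [thetaFree, G]
@[simp] theorem thetaFree_G1 : thetaFree ν (G 1) = ap ν := by simp [thetaFree, G]
@[simp] theorem thetaFree_G2 : thetaFree ν (G 2) = ν⁻¹ • kinv ν := by simp [thetaFree, G]
@[simp] theorem thetaFree_G3 : thetaFree ν (G 3) = ν • kk ν := by simp [thetaFree, G]

theorem thetaFree_rel (hν : ν ≠ 0) ⦃x y : FreeAlgebra ℂ (Fin 4)⦄ (h : OscRel ν x y) :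
    thetaFree ν x = thetaFree ν y := by
  cases h <;> simp only [map_sub, map_mul, map_smul, map_one, thetaFree_G0, thetaFree_G1,
    thetaFree_G2, thetaFree_G3]
  -- `-an ν` carries `RingQuot.instNeg`, which `mul_neg`/`neg_mul` only match with explicit arguments.
  case r1 =>
    rw [mul_neg (ap ν), neg_mul (an ν), ← an_mul_ap_sub_smul]
    match_scalars <;> field_simp
  case r2 =>
    rw [mul_neg (ap ν), neg_mul (an ν), ← an_mul_ap_sub_inv_smul]
    match_scalars <;> field_simp
  case r3 => rw [smul_mul_smul_comm, inv_mul_cancel₀ hν, one_smul, kinv_mul_kk]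
  case r4 => rw [smul_mul_smul_comm, mul_inv_cancel₀ hν, one_smul, kk_mul_kinv]
  case r5 => rw [smul_mul_assoc, kinv_mul_ap hν, mul_smul_comm]
  case r6 =>
    rw [smul_mul_assoc, mul_neg (kinv ν), kinv_mul_an hν, neg_mul (an ν), mul_smul_comm]
    match_scalars
    field_simp

def theta (hν : ν ≠ 0) : Osc ν →ₐ[ℂ] Osc ν :=
  RingQuot.liftAlgHom ℂ ⟨thetaFree ν, thetaFree_rel hν⟩

variable (hν : ν ≠ 0)

@[simp] theorem theta_ap : theta hν (ap ν) = -an ν := by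
  simp [theta, ap, RingQuot.liftAlgHom_mkAlgHom_apply]

@[simp] theorem theta_an : theta hν (an ν) = ap ν := by
  simp [theta, an, RingQuot.liftAlgHom_mkAlgHom_apply]

@[simp] theorem theta_kk : theta hν (kk ν) = ν⁻¹ • kinv ν := by
  simp [theta, kk, RingQuot.liftAlgHom_mkAlgHom_apply]

@[simp] theorem theta_kinv : theta hν (kinv ν) = ν • kk ν := by
  simp [theta, kinv, RingQuot.liftAlgHom_mkAlgHom_apply]

theorem theta_pow_four : theta hν ^ 4 = 1 := by
  apply algHom_ext <;> simp [pow_succ, smul_smul, hν]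

def thetaEquiv : Osc ν ≃ₐ[ℂ] Osc ν :=
  AlgEquiv.ofAlgHom (theta hν) (theta hν ^ 3)
    (show theta hν * theta hν ^ 3 = 1 by rw [← pow_succ', theta_pow_four])
    (show theta hν ^ 3 * theta hν = 1 by rw [← pow_succ, theta_pow_four])

end Osc

end

/-- Lemma 4.4(i): there is a unique `ℂ`-algebra homomorphism
`ϑ : B_ν → B_ν` with `ϑ(a⁺) = −a`, `ϑ(a) = a⁺`, `ϑ(k) = ν⁻¹k⁻`, `ϑ(k⁻) = νk`,
and it is bijective. -/
theorem osc_involution (ν : ℂ) (hν : ν ≠ 0) :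
    ∃ θ : Osc ν →ₐ[ℂ] Osc ν,
      (θ (ap ν) = -an ν ∧ θ (an ν) = ap ν ∧
        θ (kk ν) = ν⁻¹ • kinv ν ∧ θ (kinv ν) = ν • kk ν) ∧
      Function.Bijective θ ∧
      ∀ θ' : Osc ν →ₐ[ℂ] Osc ν,
        (θ' (ap ν) = -an ν ∧ θ' (an ν) = ap ν ∧
          θ' (kk ν) = ν⁻¹ • kinv ν ∧ θ' (kinv ν) = ν • kk ν) → θ' = θ := by
  refine ⟨Osc.theta hν, ⟨Osc.theta_ap hν, Osc.theta_an hν, Osc.theta_kk hν, Osc.theta_kinv hν⟩,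
    (Osc.thetaEquiv hν).bijective, ?_⟩
  rintro θ' ⟨hap, han, hkk, hkinv⟩
  exact Osc.algHom_ext (by simp [hap]) (by simp [han]) (by simp [hkk]) (by simp [hkinv])
end
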